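/- For every real x > 0, e^{2x}(x² − 4x + 2) + e^x(x³ + x² + 4x − 4) + 2 > 0. -/

import Mathlib

open Real

private lemma mono_aux (f f' : ℝ → ℝ) (hd : ∀ x, HasDerivAt f (f' x) x)
    (hp : ∀ x : ℝ, 0 < x → 0 < f' x) (h0 : f 0 = 0) : ∀ x : ℝ, 0 < x → 0 < f x := by
  have hmono : StrictMonoOn f (Set.Ici (0:ℝ)) := by
    apply strictMonoOn_of_deriv_pos (convex_Ici 0)
    · exact (continuous_iff_continuousAt.2 fun x => (hd x).differentiableAt.continuousAt).continuousOn
    · intro x hx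
      rw [interior_Ici] at hx
      rw [(hd x).deriv]
      exact hp x hx
  intro x hx
  have := hmono (Set.self_mem_Ici) (Set.mem_Ici.2 hx.le) hx
  rwa [h0] at this

private lemma L1 : ∀ x : ℝ, 0 < x → 0 < Real.exp x * (2 * x - 2) + 2 := by
  intro x hx
  rcases le_or_gt 1 x with h | h
  · nlinarith [Real.exp_pos x]
  · have h1 : -x + 1 < Real.exp (-x) := Real.add_one_lt_exp (by intro h; rw [neg_eq_zero] at h; linarith)
    have h2 : Real.exp x * Real.exp (-x) = 1 := by
      rw [← Real.exp_add]; simp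
    nlinarith [mul_lt_mul_of_pos_left h1 (Real.exp_pos x), Real.exp_pos x]

private lemma L2 : ∀ x : ℝ, 0 < x → 0 < Real.exp x * (2 * x - 4) + (2 * x + 4) := by
  apply mono_aux _ (fun x => Real.exp x * (2 * x - 2) + 2)
  · intro x
    have h := ((Real.hasDerivAt_exp x).mul (((hasDerivAt_id x).const_mul 2).sub_const 4)).add
      (((hasDerivAt_id x).const_mul 2).add_const 4)
    refine h.congr_deriv ?_
    simp [id]; ring
  · exact L1
  · simp

private lemma L3 : ∀ x : ℝ, 0 < x → 0 < Real.exp x * (2 * x - 6) + (x ^ 2 + 4 * x + 6) := by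
  apply mono_aux _ (fun x => Real.exp x * (2 * x - 4) + (2 * x + 4))
  · intro x
    have h := ((Real.hasDerivAt_exp x).mul (((hasDerivAt_id x).const_mul 2).sub_const 6)).add
      (((hasDerivAt_pow 2 x).add (((hasDerivAt_id x).const_mul 4))).add_const 6)
    refine h.congr_deriv ?_
    simp [id]; ring
  · exact L2
  · simp

theorem exp_ineq_11 (x : ℝ) (hx : 0 < x) :
    0 < Real.exp (2 * x) * (x ^ 2 - 4 * x + 2) +
        Real.exp x * (x ^ 3 + x ^ 2 + 4 * x - 4) + 2 := by
  have key : ∀ y : ℝ, 0 < y →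
      0 < Real.exp (2 * y) * (y ^ 2 - 4 * y + 2) +
        Real.exp y * (y ^ 3 + y ^ 2 + 4 * y - 4) + 2 := by
    apply mono_aux _
      (fun y => Real.exp (2 * y) * (2 * y ^ 2 - 6 * y) + Real.exp y * (y ^ 3 + 4 * y ^ 2 + 6 * y))
    · intro y
      have e2 : HasDerivAt (fun y : ℝ => Real.exp (2 * y)) (2 * Real.exp (2 * y)) y := by
        have := (Real.hasDerivAt_exp (2 * y)).comp y ((hasDerivAt_id y).const_mul 2)
        refine this.congr_deriv ?_
        simp [id]; ring
      have p1 : HasDerivAt (fun y : ℝ => y ^ 2 - 4 * y + 2) (2 * y - 4) y := by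
        have := ((hasDerivAt_pow 2 y).sub ((hasDerivAt_id y).const_mul 4)).add_const 2
        refine this.congr_deriv ?_
        simp [id]
      have p2 : HasDerivAt (fun y : ℝ => y ^ 3 + y ^ 2 + 4 * y - 4) (3 * y ^ 2 + 2 * y + 4) y := by
        have := (((hasDerivAt_pow 3 y).add (hasDerivAt_pow 2 y)).add
          ((hasDerivAt_id y).const_mul 4)).sub_const 4
        refine this.congr_deriv ?_
        simp [id]
      have h := ((e2.mul p1).add ((Real.hasDerivAt_exp y).mul p2)).add_const 2
      refine h.congr_deriv ?_
      ring
    · intro y hy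
      have h3 := L3 y hy
      have hey := Real.exp_pos y
      have hfac : Real.exp (2 * y) * (2 * y ^ 2 - 6 * y) + Real.exp y * (y ^ 3 + 4 * y ^ 2 + 6 * y)
          = y * Real.exp y * (Real.exp y * (2 * y - 6) + (y ^ 2 + 4 * y + 6)) := by
        rw [two_mul, Real.exp_add]; ring
      rw [hfac]
      positivity
    · norm_num
  exact key x hx
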